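/- For every irrational x ∈ (0,1), the principal convergents of the odd-odd continued fraction of x satisfy |x − p_n/q_n| < 2/q_n for every n ≥ 1, and consequently p_n/q_n → x as n → ∞. -/

import Mathlib

/-- The odd-odd continued fraction map on `[0,1]`.  For `x ∈ [(k-1)/k, k/(k+1))` with `k ≥ 1`
one has `k = ⌊1/(1-x)⌋`, and the two branches are separated by `(2k-1)/(2k+1)`. -/
noncomputable def oocfT (x : ℝ) : ℝ :=
  if x = 1 then 1
  else if x < (2 * (⌊1 / (1 - x)⌋ : ℝ) - 1) / (2 * (⌊1 / (1 - x)⌋ : ℝ) + 1) then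
    ((⌊1 / (1 - x)⌋ : ℝ) * x - ((⌊1 / (1 - x)⌋ : ℝ) - 1)) /
      ((⌊1 / (1 - x)⌋ : ℝ) - ((⌊1 / (1 - x)⌋ : ℝ) + 1) * x)
  else
    ((⌊1 / (1 - x)⌋ : ℝ) - ((⌊1 / (1 - x)⌋ : ℝ) + 1) * x) /
      ((⌊1 / (1 - x)⌋ : ℝ) * x - ((⌊1 / (1 - x)⌋ : ℝ) - 1))

/-- OOCF partial quotient `a` of a point `y`: `a = k+1` if `y` is in the lower branch
interval `((k-1)/k, (2k-1)/(2k+1))`, and `a = k` if `y ∈ ((2k-1)/(2k+1), k/(k+1))`,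
where `k = ⌊1/(1-y)⌋`. -/
noncomputable def oocfA (y : ℝ) : ℤ :=
  if y < (2 * (⌊1 / (1 - y)⌋ : ℝ) - 1) / (2 * (⌊1 / (1 - y)⌋ : ℝ) + 1) then ⌊1 / (1 - y)⌋ + 1
  else ⌊1 / (1 - y)⌋

/-- OOCF partial quotient `ε` of a point `y`: `ε = -1` on the lower branch interval and
`ε = 1` on the upper one. -/
noncomputable def oocfE (y : ℝ) : ℤ :=
  if y < (2 * (⌊1 / (1 - y)⌋ : ℝ) - 1) / (2 * (⌊1 / (1 - y)⌋ : ℝ) + 1) then -1 else 1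

/-- The OOCF convergents `(p'_n, q'_n, p_n, q_n)` of `x`, defined by
`p'_0 = 1, q'_0 = 0, p_0 = 1, q_0 = 1` and
`p'_n = a_n p_{n-1} - p'_{n-1}`, `q'_n = a_n q_{n-1} - q'_{n-1}`,
`p_n = 2 p'_n + ε_n p_{n-1}`, `q_n = 2 q'_n + ε_n q_{n-1}`,
where `(a_n, ε_n)` are the partial quotients of `x`, i.e. `a_n = oocfA (oocfT^[n-1] x)`,
`ε_n = oocfE (oocfT^[n-1] x)`. -/
noncomputable def oocfConv (x : ℝ) : ℕ → ℤ × ℤ × ℤ × ℤ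
  | 0 => (1, 0, 1, 1)
  | n + 1 =>
    let c := oocfConv x n
    (oocfA (oocfT^[n] x) * c.2.2.1 - c.1,
     oocfA (oocfT^[n] x) * c.2.2.2 - c.2.1,
     2 * (oocfA (oocfT^[n] x) * c.2.2.1 - c.1) + oocfE (oocfT^[n] x) * c.2.2.1,
     2 * (oocfA (oocfT^[n] x) * c.2.2.2 - c.2.1) + oocfE (oocfT^[n] x) * c.2.2.2)

/-- `n`-th sub-convergent numerator `p'_n`. -/
noncomputable def oocfP' (x : ℝ) (n : ℕ) : ℤ := (oocfConv x n).1

/-- `n`-th sub-convergent denominator `q'_n`. -/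
noncomputable def oocfQ' (x : ℝ) (n : ℕ) : ℤ := (oocfConv x n).2.1

/-- `n`-th principal convergent numerator `p_n`. -/
noncomputable def oocfP (x : ℝ) (n : ℕ) : ℤ := (oocfConv x n).2.2.1

/-- `n`-th principal convergent denominator `q_n`. -/
noncomputable def oocfQ (x : ℝ) (n : ℕ) : ℤ := (oocfConv x n).2.2.2

/-- `n`-th pseudo-convergent numerator: `p''_n = p'_n + ε_n p_{n-1}` for `n ≥ 1`
(with the convention `p''_0 = 0`). -/
noncomputable def oocfP'' (x : ℝ) : ℕ → ℤ
  | 0 => 0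
  | n + 1 => oocfP' x (n + 1) + oocfE (oocfT^[n] x) * oocfP x n

/-- `n`-th pseudo-convergent denominator: `q''_n = q'_n + ε_n q_{n-1}` for `n ≥ 1`
(with the convention `q''_0 = 1`). -/
noncomputable def oocfQ'' (x : ℝ) : ℕ → ℤ
  | 0 => 1
  | n + 1 => oocfQ' x (n + 1) + oocfE (oocfT^[n] x) * oocfQ x n

/-!
The map `T` is a Möbius step: on each branch `y = ((a-1) T y + (a-1+ε)) / (a T y + a+ε)`, with
`a ≥ 1`, `ε = ±1`, and `a ≥ 2` when `ε = -1`. Composing these steps along the orbit gives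
`x = (p'_n t + p''_n) / (q'_n t + q''_n)` with `t = T^n x ∈ (0,1)`, where
`p_n = p'_n + p''_n`, `q_n = q'_n + q''_n` and `p'_n q''_n - p''_n q'_n = ±1`. Hence
`|x - p_n/q_n| = (1 - t) / ((q'_n t + q''_n) q_n) < 1/q_n`, and the admissibility of the digits
forces `q_{n+1} ≥ q_n + 2`, so `q_n → ∞`.
-/

open Filter

lemma oocfP'_succ (x : ℝ) (n : ℕ) :
    oocfP' x (n + 1) = oocfA (oocfT^[n] x) * oocfP x n - oocfP' x n := rfl

lemma oocfQ'_succ (x : ℝ) (n : ℕ) :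
    oocfQ' x (n + 1) = oocfA (oocfT^[n] x) * oocfQ x n - oocfQ' x n := rfl

lemma oocfP_succ (x : ℝ) (n : ℕ) :
    oocfP x (n + 1) = 2 * oocfP' x (n + 1) + oocfE (oocfT^[n] x) * oocfP x n := rfl

lemma oocfQ_succ (x : ℝ) (n : ℕ) :
    oocfQ x (n + 1) = 2 * oocfQ' x (n + 1) + oocfE (oocfT^[n] x) * oocfQ x n := rfl

lemma oocfP_eq_add (x : ℝ) (n : ℕ) : oocfP x n = oocfP' x n + oocfP'' x n := by
  cases n with
  | zero => rfl
  | succ n => rw [oocfP_succ, oocfP'']; ring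

lemma oocfQ_eq_add (x : ℝ) (n : ℕ) : oocfQ x n = oocfQ' x n + oocfQ'' x n := by
  cases n with
  | zero => rfl
  | succ n => rw [oocfQ_succ, oocfQ'']; ring

lemma oocfE_eq_one_or_neg_one (y : ℝ) : oocfE y = 1 ∨ oocfE y = -1 := by
  unfold oocfE
  split_ifs <;> simp

lemma abs_oocf_det (x : ℝ) (n : ℕ) :
    |oocfP' x n * oocfQ'' x n - oocfP'' x n * oocfQ' x n| = 1 := by
  induction n with
  | zero => rfl
  | succ n ih =>
    have hdet : oocfP' x (n + 1) * oocfQ'' x (n + 1) - oocfP'' x (n + 1) * oocfQ' x (n + 1) =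
        -oocfE (oocfT^[n] x) * (oocfP' x n * oocfQ'' x n - oocfP'' x n * oocfQ' x n) := by
      rw [oocfQ'', oocfP'', oocfP'_succ, oocfQ'_succ, oocfP_eq_add, oocfQ_eq_add]
      ring
    rw [hdet, abs_mul, ih, abs_neg]
    rcases oocfE_eq_one_or_neg_one (oocfT^[n] x) with h | h <;> simp [h]

lemma Irrational.of_mul_add_eq {y t : ℝ} (hy : Irrational y) {a b c d : ℤ}
    (hden : c * t + d ≠ 0) (h : y * (c * t + d) = a * t + b) : Irrational t := by
  rintro ⟨r, rfl⟩
  refine hy ⟨(a * r + b) / (c * r + d), ?_⟩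
  rw [← eq_div_iff hden] at h
  push_cast
  exact h.symm

/-- Here `k = ⌊1/(1-y)⌋`; irrationality of `y` keeps it off the endpoints `(k-1)/k` and
`(2k-1)/(2k+1)`. -/
lemma exists_oocf_branch {y : ℝ} (hy : y ∈ Set.Ioo 0 1) (hirr : Irrational y) :
    ∃ k : ℤ, 1 ≤ k ∧ (k - 1 : ℝ) < k * y ∧ (k + 1) * y < k ∧
      ((y * (2 * k + 1) < 2 * k - 1 ∧ oocfA y = k + 1 ∧ oocfE y = -1 ∧
          oocfT y = (k * y - (k - 1)) / (k - (k + 1) * y)) ∨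
        (2 * k - 1 < y * (2 * k + 1) ∧ oocfA y = k ∧ oocfE y = 1 ∧
          oocfT y = (k - (k + 1) * y) / (k * y - (k - 1)))) := by
  obtain ⟨hy0, hy1⟩ := hy
  have h1y : 0 < 1 - y := sub_pos.2 hy1
  set k : ℤ := ⌊1 / (1 - y)⌋ with hk
  have hk1 : 1 ≤ k := Int.le_floor.2 (by push_cast; rw [le_div_iff₀ h1y]; linarith)
  have hkR : (1 : ℝ) ≤ k := by exact_mod_cast hk1
  have hkle : (k : ℝ) * (1 - y) ≤ 1 := (le_div_iff₀ h1y).1 (Int.floor_le _)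
  have hklow : (k - 1 : ℝ) < k * y := by
    have hne := hirr.ne_rational (k - 1) k
    push_cast at hne
    have hle : ((k : ℝ) - 1) / k ≤ y := by rw [div_le_iff₀ (by linarith)]; linarith
    have := lt_of_le_of_ne hle (Ne.symm hne)
    rwa [div_lt_iff₀ (by linarith), mul_comm] at this
  have hkup : (k + 1) * y < k := by
    have := Int.lt_floor_add_one (1 / (1 - y))
    rw [← hk, div_lt_iff₀ h1y] at this
    linarith
  refine ⟨k, hk1, hklow, hkup, ?_⟩
  have hsep := hirr.ne_rational (2 * k - 1) (2 * k + 1)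
  push_cast at hsep
  have hpos : (0 : ℝ) < 2 * k + 1 := by linarith
  unfold oocfA oocfE oocfT
  rw [if_neg hy1.ne, ← hk]
  rcases lt_or_gt_of_ne hsep with hlt | hgt
  · rw [if_pos hlt, if_pos hlt, if_pos hlt]
    exact Or.inl ⟨by rwa [lt_div_iff₀ hpos] at hlt, rfl, rfl, rfl⟩
  · have hnlt := not_lt.2 hgt.le
    rw [if_neg hnlt, if_neg hnlt, if_neg hnlt]
    exact Or.inr ⟨by rwa [div_lt_iff₀ hpos] at hgt, rfl, rfl, rfl⟩

lemma oocfT_mem_Ioo {y : ℝ} (hy : y ∈ Set.Ioo 0 1) (hirr : Irrational y) :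
    oocfT y ∈ Set.Ioo 0 1 := by
  obtain ⟨k, hk1, hklow, hkup, ⟨hsep, -, -, hT⟩ | ⟨hsep, -, -, hT⟩⟩ :=
    exists_oocf_branch hy hirr <;> rw [hT]
  · have hden : (0 : ℝ) < k - (k + 1) * y := by linarith
    exact ⟨div_pos (by linarith) hden, (div_lt_one hden).2 (by linarith)⟩
  · have hden : (0 : ℝ) < k * y - (k - 1) := by linarith
    exact ⟨div_pos (by linarith) hden, (div_lt_one hden).2 (by linarith)⟩

lemma oocf_digits_admissible {y : ℝ} (hy : y ∈ Set.Ioo 0 1) (hirr : Irrational y) :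
    (oocfE y = 1 ∧ 1 ≤ oocfA y) ∨ (oocfE y = -1 ∧ 2 ≤ oocfA y) := by
  obtain ⟨k, hk1, -, -, ⟨-, hA, hE, -⟩ | ⟨-, hA, hE, -⟩⟩ := exists_oocf_branch hy hirr
  · exact Or.inr ⟨hE, by omega⟩
  · exact Or.inl ⟨hE, by omega⟩

lemma oocf_moebius_step {y : ℝ} (hy : y ∈ Set.Ioo 0 1) (hirr : Irrational y) :
    y * (oocfA y * oocfT y + (oocfA y + oocfE y)) =
      (oocfA y - 1) * oocfT y + (oocfA y - 1 + oocfE y) := by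
  obtain ⟨k, -, hklow, hkup, ⟨hsep, hA, hE, hT⟩ | ⟨-, hA, hE, hT⟩⟩ :=
    exists_oocf_branch hy hirr <;> rw [hA, hE, hT] <;> push_cast
  · have h := div_mul_cancel₀ ((k : ℝ) * y - (k - 1)) (by linarith : (k : ℝ) - (k + 1) * y ≠ 0)
    linear_combination -h
  · have h := div_mul_cancel₀ ((k : ℝ) - (k + 1) * y) (by linarith : (k : ℝ) * y - (k - 1) ≠ 0)
    linear_combination h

lemma oocf_moebius_denom_pos {y : ℝ} (hy : y ∈ Set.Ioo 0 1) (hirr : Irrational y) :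
    0 < (oocfA y * oocfT y + (oocfA y + oocfE y) : ℝ) := by
  have hT := (oocfT_mem_Ioo hy hirr).1
  rcases oocf_digits_admissible hy hirr with ⟨hE, hA⟩ | ⟨hE, hA⟩ <;>
  · rw [hE]
    have hA' := (Int.cast_le (R := ℝ)).2 hA
    push_cast at hA' ⊢
    nlinarith

lemma irrational_oocfT {y : ℝ} (hy : y ∈ Set.Ioo 0 1) (hirr : Irrational y) :
    Irrational (oocfT y) := by
  refine hirr.of_mul_add_eq (a := oocfA y - 1) (b := oocfA y - 1 + oocfE y) (c := oocfA y)
    (d := oocfA y + oocfE y) ?_ ?_ <;> push_cast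
  · exact (oocf_moebius_denom_pos hy hirr).ne'
  · exact oocf_moebius_step hy hirr

lemma oocfT_iterate_mem_Ioo_irrational {x : ℝ} (hx : x ∈ Set.Ioo 0 1) (hirr : Irrational x)
    (n : ℕ) : oocfT^[n] x ∈ Set.Ioo 0 1 ∧ Irrational (oocfT^[n] x) := by
  induction n with
  | zero => exact ⟨hx, hirr⟩
  | succ n ih =>
    rw [Function.iterate_succ_apply']
    exact ⟨oocfT_mem_Ioo ih.1 ih.2, irrational_oocfT ih.1 ih.2⟩

lemma oocf_denominator_bounds {x : ℝ} (hx : x ∈ Set.Ioo 0 1) (hirr : Irrational x) (n : ℕ) :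
    0 ≤ oocfQ' x n ∧ 1 ≤ oocfQ'' x n ∧ 2 * n + 1 ≤ oocfQ x n := by
  induction n with
  | zero => exact ⟨le_rfl, le_rfl, le_rfl⟩
  | succ n ih =>
    obtain ⟨hq', hq'', hq⟩ := ih
    obtain ⟨hmem, hirrn⟩ := oocfT_iterate_mem_Ioo_irrational hx hirr n
    have hsum := oocfQ_eq_add x n
    rw [oocfQ'', oocfQ_succ, oocfQ'_succ]
    push_cast
    rcases oocf_digits_admissible hmem hirrn with ⟨hE, hA⟩ | ⟨hE, hA⟩ <;> rw [hE] <;>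
      refine ⟨?_, ?_, ?_⟩ <;> nlinarith

lemma oocf_moebius_iterate {x : ℝ} (hx : x ∈ Set.Ioo 0 1) (hirr : Irrational x) (n : ℕ) :
    x * (oocfQ' x n * oocfT^[n] x + oocfQ'' x n) = oocfP' x n * oocfT^[n] x + oocfP'' x n := by
  induction n with
  | zero => simp [oocfQ', oocfQ'', oocfP', oocfP'', oocfConv]
  | succ n ih =>
    obtain ⟨hmem, hirrn⟩ := oocfT_iterate_mem_Ioo_irrational hx hirr n
    have hstep := oocf_moebius_step hmem hirrn
    rw [Function.iterate_succ_apply', oocfQ'', oocfP'', oocfQ'_succ, oocfP'_succ,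
      oocfQ_eq_add, oocfP_eq_add]
    set y := oocfT^[n] x
    push_cast
    linear_combination (oocfA y * oocfT y + (oocfA y + oocfE y) : ℝ) * ih +
      (oocfP' x n - x * oocfQ' x n : ℝ) * hstep

lemma abs_sub_oocf_lt {x : ℝ} (hx : x ∈ Set.Ioo 0 1) (hirr : Irrational x) (n : ℕ) :
    |x - oocfP x n / oocfQ x n| < 1 / oocfQ x n := by
  obtain ⟨⟨ht0, ht1⟩, -⟩ := oocfT_iterate_mem_Ioo_irrational hx hirr n
  obtain ⟨hq', hq'', -⟩ := oocf_denominator_bounds hx hirr n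
  have hid := oocf_moebius_iterate hx hirr n
  have hdet : |(oocfP' x n * oocfQ'' x n - oocfP'' x n * oocfQ' x n : ℝ)| = 1 := by
    exact_mod_cast abs_oocf_det x n
  have hp : (oocfP x n : ℝ) = oocfP' x n + oocfP'' x n := by exact_mod_cast oocfP_eq_add x n
  have hqsum : (oocfQ x n : ℝ) = oocfQ' x n + oocfQ'' x n := by exact_mod_cast oocfQ_eq_add x n
  set t := oocfT^[n] x
  have hq'R : (0 : ℝ) ≤ oocfQ' x n := by exact_mod_cast hq'
  have hq''R : (1 : ℝ) ≤ oocfQ'' x n := by exact_mod_cast hq''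
  have hD : (1 : ℝ) ≤ oocfQ' x n * t + oocfQ'' x n := by nlinarith
  have hq0 : (0 : ℝ) < oocfQ x n := by rw [hqsum]; linarith
  have herr : x - oocfP x n / oocfQ x n = (t - 1) *
      (oocfP' x n * oocfQ'' x n - oocfP'' x n * oocfQ' x n) /
        ((oocfQ' x n * t + oocfQ'' x n) * oocfQ x n) := by
    rw [eq_div_iff (by positivity), sub_mul, div_mul_comm, mul_div_cancel_right₀ _ hq0.ne', hp,
      hqsum]
    linear_combination (oocfQ' x n + oocfQ'' x n : ℝ) * hid
  calc |x - oocfP x n / oocfQ x n|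
      = (1 - t) / ((oocfQ' x n * t + oocfQ'' x n) * oocfQ x n) := by
        rw [herr, abs_div, abs_mul, hdet, abs_of_neg (by linarith), abs_of_pos (by positivity)]
        ring
    _ < 1 / oocfQ x n := by
        rw [div_lt_div_iff₀ (by positivity) hq0]
        nlinarith

/-- For irrational `x ∈ (0,1)`, `|x - p_n/q_n| < 2/q_n` for all `n ≥ 1`, and the OOCF
principal convergents converge to `x`. -/
theorem oocf_convergence
    (x : ℝ) (hx : x ∈ Set.Ioo (0 : ℝ) 1) (hirr : Irrational x) :
    (∀ n : ℕ, 1 ≤ n →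
        |x - (oocfP x n : ℝ) / (oocfQ x n : ℝ)| < 2 / (oocfQ x n : ℝ)) ∧
      Filter.Tendsto (fun n => (oocfP x n : ℝ) / (oocfQ x n : ℝ))
        Filter.atTop (nhds x) := by
  have hq : ∀ n : ℕ, (2 * n + 1 : ℝ) ≤ oocfQ x n := fun n => by
    exact_mod_cast (oocf_denominator_bounds hx hirr n).2.2
  have hq0 : ∀ n : ℕ, (0 : ℝ) < oocfQ x n := fun n => by linarith [hq n, n.cast_nonneg (α := ℝ)]
  refine ⟨fun n _ => (abs_sub_oocf_lt hx hirr n).trans (by gcongr; exacts [hq0 n, one_lt_two]), ?_⟩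
  have hq_tendsto : Tendsto (fun n => (oocfQ x n : ℝ)) atTop atTop :=
    tendsto_atTop_mono (fun n => by linarith [hq n, n.cast_nonneg (α := ℝ)])
      tendsto_natCast_atTop_atTop
  rw [tendsto_iff_norm_sub_tendsto_zero]
  refine squeeze_zero_norm (fun n => ?_) hq_tendsto.inv_tendsto_atTop
  rw [Pi.inv_apply, norm_norm, Real.norm_eq_abs, abs_sub_comm, ← one_div]
  exact (abs_sub_oocf_lt hx hirr n).le
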